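/- Assume |v_1| ≤ |v_2| ≤ |v_3| and let 0 < ε_1 < ⋯ < ε_n be filtration levels with {|v_1|, |v_2|, |v_3|} ⊆ {ε_1, …, ε_n} and ε_n ≥ |v_3|. For each i ∈ {1, 2, 3}, the 1-cycle γ_i = {z, 0} + {z, v_i} + {0, v_i} defines a homology class in H_1(K̃_{ε}) for every ε ≥ |v_i| whose class at level |v_i| has persistence interval (|v_i|, ∞) in the sequence H_1(K̃_{ε_•}), and the three classes of γ_1, γ_2, γ_3 are linearly independent in H_1(K̃_{ε_n}). In particular, the 1st persistence barcode of the quotient-complex filtration contains infinite persistence intervals (b_1, ∞), (b_2, ∞), (b_3, ∞) with b_i = |v_i| for i = 1, 2, 3. -/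

import Mathlib

/-- An abstract simplicial complex on a vertex type `α`: a collection of nonempty
finite subsets of `α` closed under passing to nonempty subsets. -/
structure AbsSC (α : Type) where
  faces : Set (Finset α)
  not_empty_mem : ∅ ∉ faces
  down_closed : ∀ {s t : Finset α}, s ∈ faces → t ⊆ s → t.Nonempty → t ∈ faces

namespace AbsSC

variable {α : Type}

/-- The vertex set of an abstract simplicial complex. -/
def vertexSet (K : AbsSC α) : Set α := {v | {v} ∈ K.faces}

/-- The type of `q`-simplices (faces with `q+1` vertices). -/
def simplices (K : AbsSC α) (q : ℕ) : Type :=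
  {s : Finset α // s ∈ K.faces ∧ s.card = q + 1}

/-- The space of `q`-chains over `ℤ/2`: formal sums of `q`-simplices. -/
abbrev Chain (K : AbsSC α) (q : ℕ) : Type := K.simplices q →₀ ZMod 2

/-- The sum of the `q`-dimensional faces of a `(q+1)`-simplex. -/
noncomputable def faceChain (K : AbsSC α) (q : ℕ) (s : K.simplices (q + 1)) : K.Chain q :=
  ∑ t ∈ (s.1.powersetCard (q + 1)).attach,
    Finsupp.single
      ⟨t.1, by
        obtain ⟨hsub, hcard⟩ := Finset.mem_powersetCard.mp t.2
        refine ⟨K.down_closed s.2.1 hsub ?_, hcard⟩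
        rw [← Finset.card_pos, hcard]
        omega⟩
      (1 : ZMod 2)

/-- The boundary map `∂_{q+1} : C_{q+1}(K) → C_q(K)`, sending each `(q+1)`-simplex to
the sum of its `q`-dimensional faces. -/
noncomputable def boundary (K : AbsSC α) (q : ℕ) :
    K.Chain (q + 1) →ₗ[ZMod 2] K.Chain q :=
  Finsupp.lsum (ZMod 2) fun s => LinearMap.toSpanSingleton (ZMod 2) (K.Chain q) (K.faceChain q s)

/-- The cycle subspace: `ker ∂_q` (all of `C_0` in degree `0`). -/
noncomputable def cycles (K : AbsSC α) : (q : ℕ) → Submodule (ZMod 2) (K.Chain q)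
  | 0 => ⊤
  | q + 1 => LinearMap.ker (K.boundary q)

/-- The boundaries, viewed as a submodule of the cycles. -/
noncomputable def boundariesIn (K : AbsSC α) (q : ℕ) :
    Submodule (ZMod 2) (K.cycles q) :=
  Submodule.comap (K.cycles q).subtype (LinearMap.range (K.boundary q))

/-- The `q`-th simplicial homology over `ℤ/2`: `H_q(K) = ker ∂_q / im ∂_{q+1}`. -/
def Homology (K : AbsSC α) (q : ℕ) : Type :=
  (K.cycles q) ⧸ (K.boundariesIn q)

noncomputable instance (K : AbsSC α) (q : ℕ) : AddCommGroup (K.Homology q) :=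
  inferInstanceAs (AddCommGroup ((K.cycles q) ⧸ (K.boundariesIn q)))

noncomputable instance (K : AbsSC α) (q : ℕ) : Module (ZMod 2) (K.Homology q) :=
  inferInstanceAs (Module (ZMod 2) ((K.cycles q) ⧸ (K.boundariesIn q)))

/-- The homology class of a cycle. -/
noncomputable def hClass (K : AbsSC α) (q : ℕ) (c : K.Chain q) (hc : c ∈ K.cycles q) :
    K.Homology q :=
  Submodule.Quotient.mk ⟨c, hc⟩

/-- The chain map induced by an inclusion of simplicial complexes. -/
noncomputable def chainMap (K L : AbsSC α) (h : K.faces ⊆ L.faces) (q : ℕ) :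
    K.Chain q →ₗ[ZMod 2] L.Chain q :=
  Finsupp.lmapDomain (ZMod 2) (ZMod 2) fun s : K.simplices q =>
    (⟨s.1, h s.2.1, s.2.2⟩ : L.simplices q)

/-- `θ` is the map on `q`-th homology induced by the inclusion `K ⊆ L`: it sends the
class of every cycle `c` of `K` to the class of the image chain of `c` in `L`. -/
def InducedHom (K L : AbsSC α) (q : ℕ)
    (θ : K.Homology q →ₗ[ZMod 2] L.Homology q) : Prop :=
  ∃ h : K.faces ⊆ L.faces,
    ∀ (c : K.Chain q) (hc : c ∈ K.cycles q),
      ∃ hc' : chainMap K L h q c ∈ L.cycles q,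
        θ (K.hClass q c hc) = L.hClass q (chainMap K L h q c) hc'

end AbsSC

/-- The faces of the gluing stars `S = S_1 ⊔ ⋯ ⊔ S_k`: for each `j`, the vertex `{z j}`,
the vertices `{v}` for `v ∈ P j`, and the edges `{z j, v}` for `v ∈ P j`. -/
def starFaces {α : Type} [DecidableEq α] {k : ℕ} (P : Fin k → Set α) (z : Fin k → α) :
    Set (Finset α) :=
  {s | ∃ j : Fin k, s = {z j} ∨ ∃ v ∈ P j, s = {v} ∨ s = {z j, v}}

section Tower

variable {W : ℕ → Type} [∀ i, AddCommGroup (W i)] [∀ i, Module (ZMod 2) (W i)]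

/-- The composite `φ_{i,j} = φ_{j-1} ∘ ⋯ ∘ φ_i` of the connecting maps of a tower
(the identity when `i = j`). -/
noncomputable def comps (φ : ∀ i, W i →ₗ[ZMod 2] W (i + 1)) {i j : ℕ} (h : i ≤ j) :
    W i →ₗ[ZMod 2] W j :=
  Nat.leRecOn (C := fun m => W i →ₗ[ZMod 2] W m) h (fun {m} g => (φ m).comp g) LinearMap.id

/-- `s ∈ W b` has persistence interval `(b, d)` with finite death `d ∈ {b+1, …, n}`:
`s ∉ im φ_{b-1}`, `φ_{b,d'}(s) ∉ im φ_{b-1,d'}` for all `b ≤ d' < d`, and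
`φ_{b,d}(s) ∈ im φ_{b-1,d}`. -/
def HasPersIntervalFin (φ : ∀ i, W i →ₗ[ZMod 2] W (i + 1)) (n b d : ℕ) (s : W b) : Prop :=
  ∃ (_ : 1 ≤ b) (hbd : b < d) (_ : d ≤ n),
    s ∉ LinearMap.range (comps φ (Nat.sub_le b 1)) ∧
    (∀ (d' : ℕ) (hd' : b ≤ d'), d' < d →
      comps φ hd' s ∉ LinearMap.range (comps φ (Nat.le_trans (Nat.sub_le b 1) hd'))) ∧
    comps φ (Nat.le_of_lt hbd) s ∈
      LinearMap.range (comps φ (Nat.le_trans (Nat.sub_le b 1) (Nat.le_of_lt hbd)))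

/-- `s ∈ W b` has persistence interval `(b, ∞)`: `s ∉ im φ_{b-1}` and
`φ_{b,d'}(s) ∉ im φ_{b-1,d'}` for all `b ≤ d' ≤ n`. -/
def HasPersIntervalInf (φ : ∀ i, W i →ₗ[ZMod 2] W (i + 1)) (n b : ℕ) (s : W b) : Prop :=
  ∃ _ : 1 ≤ b,
    s ∉ LinearMap.range (comps φ (Nat.sub_le b 1)) ∧
    ∀ (d' : ℕ) (hd' : b ≤ d'), d' ≤ n →
      comps φ hd' s ∉ LinearMap.range (comps φ (Nat.le_trans (Nat.sub_le b 1) hd'))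

end Tower

/-- The four points of the extended motif `V = {v₀, v₁, v₂, v₃}` in `ℝ³`, where
`v₀ = (0,0,0)` is the motif point and `v₁, v₂, v₃` are the basis vectors. -/
noncomputable def pt (v : Fin 3 → EuclideanSpace ℝ (Fin 3)) :
    Fin 4 → EuclideanSpace ℝ (Fin 3) :=
  ![0, v 0, v 1, v 2]

/-- The faces of the Vietoris--Rips complex `K_ε` on the abstract vertex set
`{some 0, some 1, some 2, some 3}` (the vertex `none` is reserved for the gluing-star
vertex `z`): nonempty subsets of `V` all of whose pairwise bipartite extended
distances are at most `ε` (the distance being `+∞` between two distinct nonzero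
points, and the Euclidean distance otherwise). -/
def VRfaces (v : Fin 3 → EuclideanSpace ℝ (Fin 3)) (ε : ℝ) : Set (Finset (Option (Fin 4))) :=
  {s | s.Nonempty ∧ (∀ a ∈ s, a ≠ none) ∧
    ∀ u w : Fin 4, some u ∈ s → some w ∈ s →
      (u = w ∨ u = 0 ∨ w = 0) ∧ dist (pt v u) (pt v w) ≤ ε}

/-- The faces of the gluing star `S`: the single new vertex `z = none`, the vertices
of `V`, and the edges `{z, u}` for `u ∈ V` (all four points of `V` form a single
equivalence class under the periodic relation). -/
def starFaces18 : Set (Finset (Option (Fin 4))) :=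
  {s | s = {none} ∨ ∃ u : Fin 4, s = {some u} ∨ s = ({none, some u} : Finset (Option (Fin 4)))}

/-- The 1-cycle `γᵢ = {z, v₀} + {z, vᵢ} + {v₀, vᵢ}` (for `i = 1, 2, 3`;
here `i : Fin 3` and `vᵢ` is `some i.succ`). -/
noncomputable def gammaChain (Kt : AbsSC (Option (Fin 4))) (i : Fin 3)
    (h1 : ({none, some 0} : Finset (Option (Fin 4))) ∈ Kt.faces)
    (h2 : ({none, some i.succ} : Finset (Option (Fin 4))) ∈ Kt.faces)
    (h3 : ({some 0, some i.succ} : Finset (Option (Fin 4))) ∈ Kt.faces) :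
    Kt.Chain 1 :=
  Finsupp.single ⟨{none, some 0}, h1, by simp⟩ (1 : ZMod 2)
    + Finsupp.single ⟨{none, some i.succ}, h2, by simp⟩ (1 : ZMod 2)
    + Finsupp.single ⟨{some 0, some i.succ}, h3, by
        rw [Finset.card_pair (by simp [(Fin.succ_ne_zero i).symm])]⟩ (1 : ZMod 2)

/-!
Since no complex of the filtration has a 2-simplex, `H₁ = Z₁`, and the coefficient of a fixed
edge is a linear functional on `H₁` that commutes with the maps induced by inclusions. For the
edge `{v₀, vᵢ}` this functional takes the value `1` on `[γᵢ]` and `0` on `[γⱼ]` for `j ≠ i`, and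
it vanishes identically at every level below `|vᵢ|`, where the edge is not yet present. So the
image of `[γᵢ]` never lies in the image of an earlier level, and the three classes are
linearly independent.
-/

namespace AbsSC

variable {α : Type} (K : AbsSC α)

lemma boundary_single (q : ℕ) (s : K.simplices (q + 1)) :
    K.boundary q (Finsupp.single s 1) = K.faceChain q s := by
  rw [boundary, Finsupp.lsum_single, LinearMap.toSpanSingleton_apply, one_smul]

lemma faceChain_apply [DecidableEq α] (q : ℕ) (s : K.simplices (q + 1)) (u : K.simplices q) :
    K.faceChain q s u = if u.1 ⊆ s.1 then 1 else 0 := by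
  classical
  have hval : ∀ (t : Finset α) (ht : t ∈ K.faces ∧ t.card = q + 1),
      ((⟨t, ht⟩ : K.simplices q) = u) = (t = u.1) :=
    fun t ht => propext Subtype.ext_iff
  rw [faceChain, Finsupp.finsetSum_apply]
  refine (Finset.sum_congr rfl fun t _ => Finsupp.single_apply).trans ?_
  simp only [hval]
  rw [Finset.sum_attach (s.1.powersetCard (q + 1)) (fun t => if t = u.1 then (1 : ZMod 2) else 0),
    Finset.sum_ite_eq']
  simp [Finset.mem_powersetCard, u.2.2]

lemma isEmpty_simplices_of_card_le {q : ℕ} (h : ∀ s ∈ K.faces, s.card ≤ q + 1) :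
    IsEmpty (K.simplices (q + 1)) :=
  ⟨fun s => by have := h s.1 s.2.1; have := s.2.2; omega⟩

/-- In `ℤ/2` the boundary of a triangle of edges cancels vertex by vertex. -/
lemma single_add_single_add_single_mem_cycles [DecidableEq α] {a b c : α}
    (hab : a ≠ b) (hac : a ≠ c) (hbc : b ≠ c) (e₁ e₂ e₃ : K.simplices 1)
    (h₁ : e₁.1 = {a, b}) (h₂ : e₂.1 = {a, c}) (h₃ : e₃.1 = {b, c}) :
    Finsupp.single e₁ 1 + Finsupp.single e₂ 1 + Finsupp.single e₃ 1 ∈ K.cycles 1 := by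
  change _ ∈ LinearMap.ker (K.boundary 0)
  rw [LinearMap.mem_ker, map_add, map_add, boundary_single, boundary_single, boundary_single]
  ext u
  obtain ⟨x, hx⟩ := Finset.card_eq_one.mp u.2.2
  simp only [Finsupp.add_apply, faceChain_apply, hx, h₁, h₂, h₃, Finset.singleton_subset_iff,
    Finset.mem_insert, Finset.mem_singleton, Finsupp.coe_zero, Pi.zero_apply]
  rcases eq_or_ne x a with rfl | hxa
  · simp [hab, hac, CharTwo.add_self_eq_zero]
  rcases eq_or_ne x b with rfl | hxb
  · simp [hab.symm, hbc, CharTwo.add_self_eq_zero]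
  rcases eq_or_ne x c with rfl | hxc
  · simp [hac.symm, hbc.symm, CharTwo.add_self_eq_zero]
  simp [hxa, hxb, hxc]

noncomputable def coeff (q : ℕ) (T : Finset α) : K.Chain q →ₗ[ZMod 2] ZMod 2 :=
  Finsupp.lapply T ∘ₗ Finsupp.lmapDomain (ZMod 2) (ZMod 2) fun s : K.simplices q => s.1

variable {K}

lemma coeff_single_self {q : ℕ} (s : K.simplices q) (r : ZMod 2) :
    K.coeff q s.1 (Finsupp.single s r) = r := by
  simp [coeff]

lemma coeff_single_of_ne {q : ℕ} {T : Finset α} (s : K.simplices q) (r : ZMod 2)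
    (h : s.1 ≠ T) : K.coeff q T (Finsupp.single s r) = 0 := by
  simp [coeff, h]

lemma coeff_eq_zero_of_notMem {q : ℕ} {T : Finset α} (hT : T ∉ K.faces) (c : K.Chain q) :
    K.coeff q T c = 0 :=
  Finsupp.mapDomain_of_notMem_range _ _ (by rintro ⟨s, rfl⟩; exact hT s.2.1)

lemma coeff_chainMap {L : AbsSC α} (h : K.faces ⊆ L.faces) (q : ℕ) (T : Finset α)
    (c : K.Chain q) : L.coeff q T (chainMap K L h q c) = K.coeff q T c := by
  simp only [coeff, chainMap, LinearMap.comp_apply, Finsupp.lmapDomain_apply]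
  erw [← Finsupp.mapDomain_comp]
  rfl

lemma exists_hClass_eq {q : ℕ} (x : K.Homology q) :
    ∃ (c : K.Chain q) (hc : c ∈ K.cycles q), K.hClass q c hc = x := by
  obtain ⟨y, rfl⟩ := Submodule.mkQ_surjective (K.boundariesIn q) x
  exact ⟨y.1, y.2, rfl⟩

variable (K)

open Classical in
/-- When `K` has no `(q+1)`-simplices there are no boundaries, so the coefficient of `T` is
well defined on `H_q(K)`; otherwise the junk value `0` is used. -/
noncomputable def homologyCoeff (q : ℕ) (T : Finset α) : K.Homology q →ₗ[ZMod 2] ZMod 2 :=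
  if h : IsEmpty (K.simplices (q + 1)) then
    (K.boundariesIn q).liftQ ((K.coeff q T).comp (K.cycles q).subtype) (by
      rintro x ⟨y, hy⟩
      rw [Subsingleton.elim y 0, map_zero, Submodule.subtype_apply] at hy
      rw [LinearMap.mem_ker, LinearMap.comp_apply, Submodule.subtype_apply, ← hy, map_zero])
  else 0

variable {K}

lemma homologyCoeff_hClass {q : ℕ} (hK : IsEmpty (K.simplices (q + 1))) (T : Finset α)
    (c : K.Chain q) (hc : c ∈ K.cycles q) :
    K.homologyCoeff q T (K.hClass q c hc) = K.coeff q T c := by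
  simp only [homologyCoeff, hK, ↓reduceDIte]
  rfl

lemma homologyCoeff_eq_zero_of_notMem {q : ℕ} {T : Finset α} (hT : T ∉ K.faces) :
    K.homologyCoeff q T = 0 := by
  by_cases hK : IsEmpty (K.simplices (q + 1))
  · ext x
    obtain ⟨c, hc, rfl⟩ := exists_hClass_eq x
    rw [homologyCoeff_hClass hK, coeff_eq_zero_of_notMem hT, LinearMap.zero_apply]
  · simp [homologyCoeff, hK]

lemma homologyCoeff_comp_of_inducedHom {L : AbsSC α} {q : ℕ}
    {θ : K.Homology q →ₗ[ZMod 2] L.Homology q} (hθ : InducedHom K L q θ)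
    (hK : IsEmpty (K.simplices (q + 1))) (hL : IsEmpty (L.simplices (q + 1))) (T : Finset α) :
    (L.homologyCoeff q T).comp θ = K.homologyCoeff q T := by
  ext x
  obtain ⟨c, hc, rfl⟩ := exists_hClass_eq x
  obtain ⟨h, hθc⟩ := hθ
  obtain ⟨hc', hθc⟩ := hθc c hc
  rw [LinearMap.comp_apply, hθc, homologyCoeff_hClass hL, homologyCoeff_hClass hK,
    coeff_chainMap]

end AbsSC

section Tower

variable {W : ℕ → Type} [∀ i, AddCommGroup (W i)] [∀ i, Module (ZMod 2) (W i)]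
  (φ : ∀ i, W i →ₗ[ZMod 2] W (i + 1))

lemma comps_self {i : ℕ} (h : i ≤ i) : comps φ h = LinearMap.id :=
  Nat.leRecOn_self _

lemma comps_succ {i j : ℕ} (hij : i ≤ j) (h : i ≤ j + 1) :
    comps φ h = (φ j).comp (comps φ hij) :=
  Nat.leRecOn_succ _ _

variable {φ} {n : ℕ} {f : ∀ i, W i →ₗ[ZMod 2] ZMod 2}

lemma comp_comps_of_compatible (hf : ∀ i < n, (f (i + 1)).comp (φ i) = f i) {a b : ℕ}
    (hab : a ≤ b) (hbn : b ≤ n) : (f b).comp (comps φ hab) = f a := by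
  induction b, hab using Nat.le_induction with
  | base => rw [comps_self, LinearMap.comp_id]
  | succ b hab ih =>
    rw [comps_succ φ hab, ← LinearMap.comp_assoc, hf b hbn, ih (by omega)]

lemma comps_notMem_range_of_compatible (hf : ∀ i < n, (f (i + 1)).comp (φ i) = f i)
    {b d : ℕ} (hbd : b ≤ d) (hdn : d ≤ n) (hprev : f (b - 1) = 0) {s : W b} (hs : f b s ≠ 0) :
    comps φ hbd s ∉ LinearMap.range (comps φ ((Nat.sub_le b 1).trans hbd)) := by
  rintro ⟨y, hy⟩
  have key := congrArg (f d) hy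
  rw [← LinearMap.comp_apply, ← LinearMap.comp_apply, comp_comps_of_compatible hf _ hdn,
    comp_comps_of_compatible hf _ hdn, hprev, LinearMap.zero_apply] at key
  exact hs key.symm

lemma hasPersIntervalInf_of_compatible (hf : ∀ i < n, (f (i + 1)).comp (φ i) = f i)
    {b : ℕ} (hb : 1 ≤ b) (hbn : b ≤ n) (hprev : f (b - 1) = 0) {s : W b} (hs : f b s ≠ 0) :
    HasPersIntervalInf φ n b s := by
  refine ⟨hb, ?_, fun d hbd hdn => comps_notMem_range_of_compatible hf hbd hdn hprev hs⟩
  simpa [comps_self] using comps_notMem_range_of_compatible hf le_rfl hbn hprev hs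

end Tower

section Motif

variable {v : Fin 3 → EuclideanSpace ℝ (Fin 3)} {ε : ℝ}

lemma dist_pt_zero_succ (i : Fin 3) :
    dist (pt v 0) (pt v i.succ) = ‖v i‖ := by
  fin_cases i <;> simp [pt]

lemma pair_none_mem_starFaces18 (u : Fin 4) :
    ({none, some u} : Finset (Option (Fin 4))) ∈ starFaces18 :=
  Or.inr ⟨u, Or.inr rfl⟩

lemma edge_notMem_starFaces18 (i : Fin 3) :
    ({some 0, some i.succ} : Finset (Option (Fin 4))) ∉ starFaces18 := by
  simp only [starFaces18, Set.mem_ofPred_eq, not_or, not_exists]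
  decide +revert

lemma edge_mem_VRfaces {i : Fin 3} (h : ‖v i‖ ≤ ε) :
    ({some 0, some i.succ} : Finset (Option (Fin 4))) ∈ VRfaces v ε := by
  have hε : 0 ≤ ε := (norm_nonneg _).trans h
  refine ⟨Finset.insert_nonempty _ _, by simp, ?_⟩
  intro u w hu hw
  simp only [Finset.mem_insert, Finset.mem_singleton, Option.some.injEq] at hu hw
  rcases hu with rfl | rfl <;> rcases hw with rfl | rfl <;>
    simp [dist_pt_zero_succ, dist_comm (pt v i.succ), *]

lemma edge_notMem_VRfaces {i : Fin 3} (h : ε < ‖v i‖) :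
    ({some 0, some i.succ} : Finset (Option (Fin 4))) ∉ VRfaces v ε := by
  rintro ⟨-, -, hdist⟩
  have := (hdist 0 i.succ (by simp) (by simp)).2
  rw [dist_pt_zero_succ] at this
  linarith

/-- Distinct points of a face are joined by a finite edge, so at most one of them is not `v₀`. -/
lemma card_le_two_of_mem_VRfaces {s : Finset (Option (Fin 4))} (hs : s ∈ VRfaces v ε) :
    s.card ≤ 2 := by
  obtain ⟨-, hnone, hdist⟩ := hs
  have hrest : (s.erase (some 0)).card ≤ 1 := by
    rw [Finset.card_le_one]
    intro a ha b hb
    obtain ⟨ha0, has⟩ := Finset.mem_erase.mp ha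
    obtain ⟨hb0, hbs⟩ := Finset.mem_erase.mp hb
    obtain ⟨u, rfl⟩ := Option.ne_none_iff_exists'.mp (hnone a has)
    obtain ⟨w, rfl⟩ := Option.ne_none_iff_exists'.mp (hnone b hbs)
    rcases (hdist u w has hbs).1 with rfl | rfl | rfl
    · rfl
    · exact absurd rfl ha0
    · exact absurd rfl hb0
  have := Finset.pred_card_le_card_erase (s := s) (a := some 0)
  omega

lemma card_le_two_of_mem_starFaces18 {s : Finset (Option (Fin 4))} (hs : s ∈ starFaces18) :
    s.card ≤ 2 := by
  rcases hs with rfl | ⟨u, rfl | rfl⟩ <;> simp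

lemma card_le_two_of_mem_union {s : Finset (Option (Fin 4))}
    (hs : s ∈ VRfaces v ε ∪ starFaces18) : s.card ≤ 2 :=
  hs.elim card_le_two_of_mem_VRfaces card_le_two_of_mem_starFaces18

lemma edge_notMem_union {i : Fin 3} (h : ε < ‖v i‖) :
    ({some 0, some i.succ} : Finset (Option (Fin 4))) ∉ VRfaces v ε ∪ starFaces18 :=
  fun hs => hs.elim (edge_notMem_VRfaces h) (edge_notMem_starFaces18 i)

lemma gammaChain_mem_cycles (K : AbsSC (Option (Fin 4))) (i : Fin 3)
    (h1 : ({none, some 0} : Finset (Option (Fin 4))) ∈ K.faces)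
    (h2 : ({none, some i.succ} : Finset (Option (Fin 4))) ∈ K.faces)
    (h3 : ({some 0, some i.succ} : Finset (Option (Fin 4))) ∈ K.faces) :
    gammaChain K i h1 h2 h3 ∈ K.cycles 1 :=
  K.single_add_single_add_single_mem_cycles (by simp) (by simp)
    (by simp [(Fin.succ_ne_zero i).symm]) _ _ _ rfl rfl rfl

lemma pair_none_ne_edge (u : Fin 4) (i : Fin 3) :
    ({none, some u} : Finset (Option (Fin 4))) ≠ {some 0, some i.succ} := by
  decide +revert

lemma edge_eq_edge_iff {i j : Fin 3} :
    ({some 0, some j.succ} : Finset (Option (Fin 4))) = {some 0, some i.succ} ↔ j = i := by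
  decide +revert

lemma coeff_gammaChain (K : AbsSC (Option (Fin 4))) (i j : Fin 3)
    (h1 : ({none, some 0} : Finset (Option (Fin 4))) ∈ K.faces)
    (h2 : ({none, some j.succ} : Finset (Option (Fin 4))) ∈ K.faces)
    (h3 : ({some 0, some j.succ} : Finset (Option (Fin 4))) ∈ K.faces) :
    K.coeff 1 {some 0, some i.succ} (gammaChain K j h1 h2 h3) = if j = i then 1 else 0 := by
  erw [gammaChain, map_add, map_add, AbsSC.coeff_single_of_ne _ _ (pair_none_ne_edge 0 i),
    AbsSC.coeff_single_of_ne _ _ (pair_none_ne_edge j.succ i), zero_add]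
  split_ifs with hji
  · subst hji
    exact AbsSC.coeff_single_self _ _
  · exact AbsSC.coeff_single_of_ne _ _ (mt edge_eq_edge_iff.mp hji)

end Motif

theorem stmt18_general (v : Fin 3 → EuclideanSpace ℝ (Fin 3))
    (hord1 : ‖v 0‖ ≤ ‖v 1‖) (hord2 : ‖v 1‖ ≤ ‖v 2‖)
    (n : ℕ) (hn : 1 ≤ n)
    (ε : ℕ → ℝ)
    (hεmono : ∀ i j, 1 ≤ i → i < j → j ≤ n → ε i < ε j)
    (hεtop : ‖v 2‖ ≤ ε n)
    (Kt : ℕ → AbsSC (Option (Fin 4)))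
    (hKt0 : (Kt 0).faces = ∅)
    (hKt : ∀ i, 1 ≤ i → i ≤ n → (Kt i).faces = VRfaces v (ε i) ∪ starFaces18)
    (ψ : ∀ i : ℕ, (Kt i).Homology 1 →ₗ[ZMod 2] (Kt (i + 1)).Homology 1)
    (hψ : ∀ i, i < n → AbsSC.InducedHom (Kt i) (Kt (i + 1)) 1 (ψ i)) :
    (∀ (i : Fin 3) (m : ℕ), 1 ≤ m → m ≤ n → ‖v i‖ ≤ ε m →
      ∃ (h1 : ({none, some 0} : Finset (Option (Fin 4))) ∈ (Kt m).faces)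
        (h2 : ({none, some i.succ} : Finset (Option (Fin 4))) ∈ (Kt m).faces)
        (h3 : ({some 0, some i.succ} : Finset (Option (Fin 4))) ∈ (Kt m).faces),
        gammaChain (Kt m) i h1 h2 h3 ∈ (Kt m).cycles 1) ∧
    (∀ (i : Fin 3) (m : ℕ), 1 ≤ m → m ≤ n → ε m = ‖v i‖ →
      ∃ (h1 : ({none, some 0} : Finset (Option (Fin 4))) ∈ (Kt m).faces)
        (h2 : ({none, some i.succ} : Finset (Option (Fin 4))) ∈ (Kt m).faces)
        (h3 : ({some 0, some i.succ} : Finset (Option (Fin 4))) ∈ (Kt m).faces)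
        (hcyc : gammaChain (Kt m) i h1 h2 h3 ∈ (Kt m).cycles 1),
        HasPersIntervalInf ψ n m ((Kt m).hClass 1 (gammaChain (Kt m) i h1 h2 h3) hcyc)) ∧
    (∃ (h1 : ({none, some 0} : Finset (Option (Fin 4))) ∈ (Kt n).faces)
        (h2 : ∀ i : Fin 3, ({none, some i.succ} : Finset (Option (Fin 4))) ∈ (Kt n).faces)
        (h3 : ∀ i : Fin 3, ({some 0, some i.succ} : Finset (Option (Fin 4))) ∈ (Kt n).faces)
        (hcyc : ∀ i : Fin 3, gammaChain (Kt n) i h1 (h2 i) (h3 i) ∈ (Kt n).cycles 1),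
      LinearIndependent (ZMod 2)
        (fun i : Fin 3 =>
          (Kt n).hClass 1 (gammaChain (Kt n) i h1 (h2 i) (h3 i)) (hcyc i))) := by
  have hdim : ∀ m ≤ n, IsEmpty ((Kt m).simplices 2) := by
    refine fun m hm => (Kt m).isEmpty_simplices_of_card_le fun s hs => ?_
    rcases Nat.eq_zero_or_pos m with rfl | hm1
    · simp [hKt0] at hs
    · exact card_le_two_of_mem_union (hKt m hm1 hm ▸ hs)
  have hstar : ∀ m u, 1 ≤ m → m ≤ n → ({none, some u} : Finset (Option (Fin 4))) ∈ (Kt m).faces :=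
    fun m u hm1 hm => hKt m hm1 hm ▸ Or.inr (pair_none_mem_starFaces18 u)
  have hedge : ∀ m (i : Fin 3), 1 ≤ m → m ≤ n → ‖v i‖ ≤ ε m →
      ({some 0, some i.succ} : Finset (Option (Fin 4))) ∈ (Kt m).faces :=
    fun m i hm1 hm h => hKt m hm1 hm ▸ Or.inl (edge_mem_VRfaces h)
  have hcompat : ∀ T, ∀ m < n,
      ((Kt (m + 1)).homologyCoeff 1 T).comp (ψ m) = (Kt m).homologyCoeff 1 T :=
    fun T m hm => AbsSC.homologyCoeff_comp_of_inducedHom (hψ m hm) (hdim m hm.le) (hdim _ hm) T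
  have hcoeff : ∀ m ≤ n, ∀ i j h1 h2 h3 hc, (Kt m).homologyCoeff 1 {some 0, some i.succ}
      ((Kt m).hClass 1 (gammaChain (Kt m) j h1 h2 h3) hc) = if j = i then 1 else 0 :=
    fun m hm i j h1 h2 h3 hc => by rw [AbsSC.homologyCoeff_hClass (hdim m hm), coeff_gammaChain]
  have hvn : ∀ i : Fin 3, ‖v i‖ ≤ ε n := by
    intro i
    fin_cases i
    exacts [(hord1.trans hord2).trans hεtop, hord2.trans hεtop, hεtop]
  refine ⟨fun i m hm1 hm hvm => ?_, fun i m hm1 hm hεm => ?_, ?_⟩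
  · exact ⟨hstar m 0 hm1 hm, hstar m i.succ hm1 hm, hedge m i hm1 hm hvm,
      gammaChain_mem_cycles _ i _ _ _⟩
  · refine ⟨hstar m 0 hm1 hm, hstar m i.succ hm1 hm, hedge m i hm1 hm hεm.ge,
      gammaChain_mem_cycles _ i _ _ _, hasPersIntervalInf_of_compatible
        (f := fun k => (Kt k).homologyCoeff 1 {some 0, some i.succ})
        (fun k hk => hcompat _ k hk) hm1 hm ?_ ?_⟩
    · refine AbsSC.homologyCoeff_eq_zero_of_notMem ?_
      rcases Nat.eq_or_lt_of_le hm1 with rfl | hm2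
      · simp [hKt0]
      · rw [hKt (m - 1) (by omega) (by omega)]
        exact edge_notMem_union (hεm ▸ hεmono (m - 1) m (by omega) (by omega) hm)
    · rw [hcoeff m hm, if_pos rfl]
      exact one_ne_zero
  · refine ⟨hstar n 0 hn le_rfl, fun i => hstar n i.succ hn le_rfl,
      fun i => hedge n i hn le_rfl (hvn i), fun i => gammaChain_mem_cycles _ i _ _ _, ?_⟩
    refine LinearIndependent.of_pairwise_dual_eq_zero_one _
      (fun i => (Kt n).homologyCoeff 1 {some 0, some i.succ}) (fun i j hij => ?_) (fun i => ?_)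
    · simp [hcoeff n le_rfl, hij.symm]
    · simp [hcoeff n le_rfl]

/-- for a basis `{v₁, v₂, v₃}` of `ℝ³` with `|v₁| ≤ |v₂| ≤ |v₃|`, motif
`{(0,0,0)}` and extended point cloud `V`, filtration levels `0 < ε 1 < ⋯ < ε n`
containing `|v₁|, |v₂|, |v₃|` with `ε n ≥ |v₃|`, and the quotient-complex filtration
`K̃_{ε_•}` (realized by the gluing-star complexes `Kt i` with faces
`VRfaces v (ε i) ∪ starFaces18`): each 1-cycle `γᵢ = {z,0} + {z,vᵢ} + {0,vᵢ}` defines a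
homology class in `H₁(K̃_ε)` for every level `ε ≥ |vᵢ|`, whose class at the level
`|vᵢ|` has persistence interval `(|vᵢ|, ∞)`, and the three classes of `γ₁, γ₂, γ₃` are
linearly independent in `H₁(K̃_{ε_n})`.  In particular, the 1st persistence barcode of
the quotient-complex filtration contains infinite intervals `(bᵢ, ∞)` with
`bᵢ = |vᵢ|`. -/
theorem stmt18 (v : Fin 3 → EuclideanSpace ℝ (Fin 3))
    (hvli : LinearIndependent ℝ v)
    (hvspan : Submodule.span ℝ (Set.range v) = ⊤)
    (hord1 : ‖v 0‖ ≤ ‖v 1‖) (hord2 : ‖v 1‖ ≤ ‖v 2‖)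
    (n : ℕ) (hn : 1 ≤ n)
    (ε : ℕ → ℝ)
    (hεpos : 0 < ε 1)
    (hεmono : ∀ i j, 1 ≤ i → i < j → j ≤ n → ε i < ε j)
    (hεlev : ∀ i : Fin 3, ∃ m, 1 ≤ m ∧ m ≤ n ∧ ε m = ‖v i‖)
    (hεtop : ‖v 2‖ ≤ ε n)
    (Kt : ℕ → AbsSC (Option (Fin 4)))
    (hKt0 : (Kt 0).faces = ∅)
    (hKt : ∀ i, 1 ≤ i → i ≤ n → (Kt i).faces = VRfaces v (ε i) ∪ starFaces18)
    (ψ : ∀ i : ℕ, (Kt i).Homology 1 →ₗ[ZMod 2] (Kt (i + 1)).Homology 1)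
    (hψ : ∀ i, i < n → AbsSC.InducedHom (Kt i) (Kt (i + 1)) 1 (ψ i)) :
    (∀ (i : Fin 3) (m : ℕ), 1 ≤ m → m ≤ n → ‖v i‖ ≤ ε m →
      ∃ (h1 : ({none, some 0} : Finset (Option (Fin 4))) ∈ (Kt m).faces)
        (h2 : ({none, some i.succ} : Finset (Option (Fin 4))) ∈ (Kt m).faces)
        (h3 : ({some 0, some i.succ} : Finset (Option (Fin 4))) ∈ (Kt m).faces),
        gammaChain (Kt m) i h1 h2 h3 ∈ (Kt m).cycles 1) ∧
    (∀ (i : Fin 3) (m : ℕ), 1 ≤ m → m ≤ n → ε m = ‖v i‖ →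
      ∃ (h1 : ({none, some 0} : Finset (Option (Fin 4))) ∈ (Kt m).faces)
        (h2 : ({none, some i.succ} : Finset (Option (Fin 4))) ∈ (Kt m).faces)
        (h3 : ({some 0, some i.succ} : Finset (Option (Fin 4))) ∈ (Kt m).faces)
        (hcyc : gammaChain (Kt m) i h1 h2 h3 ∈ (Kt m).cycles 1),
        HasPersIntervalInf ψ n m ((Kt m).hClass 1 (gammaChain (Kt m) i h1 h2 h3) hcyc)) ∧
    (∃ (h1 : ({none, some 0} : Finset (Option (Fin 4))) ∈ (Kt n).faces)
        (h2 : ∀ i : Fin 3, ({none, some i.succ} : Finset (Option (Fin 4))) ∈ (Kt n).faces)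
        (h3 : ∀ i : Fin 3, ({some 0, some i.succ} : Finset (Option (Fin 4))) ∈ (Kt n).faces)
        (hcyc : ∀ i : Fin 3, gammaChain (Kt n) i h1 (h2 i) (h3 i) ∈ (Kt n).cycles 1),
      LinearIndependent (ZMod 2)
        (fun i : Fin 3 =>
          (Kt n).hClass 1 (gammaChain (Kt n) i h1 (h2 i) (h3 i)) (hcyc i))) :=
  stmt18_general v hord1 hord2 n hn ε hεmono hεtop Kt hKt0 hKt ψ hψ
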